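/- arXiv:1006.0714 — 2 statements merged into one kernel-verified Lean document; each statement's English description precedes it below -/
import Mathlib

section
/- Let L be a finite, connected (strongly connected via shared edges), pure 2-dimensional, non-branching simplicial complex. Then f^1(L) ≥ (f^2(L) − 1) + (f^0(L) − 1), i.e. the number of edges is at least the number of triangles plus the number of vertices minus 2. Consequently χ(L) = f^0 − f^1 + f^2 ≤ 2. -/
open Finset

variable {V : Type*} [DecidableEq V]

/-- A finite abstract simplicial complex: a finite collection of finite subsets
closed under taking subsets. -/
def IsComplex (Δ : Finset (Finset V)) : Prop :=
  ∀ σ ∈ Δ, ∀ τ ⊆ σ, τ ∈ Δ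

/-- The link of a simplex `τ`. -/
def lkS (Δ : Finset (Finset V)) (τ : Finset V) : Finset (Finset V) :=
  Δ.filter fun σ => σ ∩ τ = ∅ ∧ σ ∪ τ ∈ Δ

/-- The link of a vertex `v`. -/
def lk (Δ : Finset (Finset V)) (v : V) : Finset (Finset V) :=
  Δ.filter fun σ => v ∉ σ ∧ insert v σ ∈ Δ

/-- The closed star of a vertex `v`. -/
def closedStar (Δ : Finset (Finset V)) (v : V) : Finset (Finset V) :=
  Δ.filter fun σ => insert v σ ∈ Δ

/-- The deletion of a vertex `v`. -/
def deletion (Δ : Finset (Finset V)) (v : V) : Finset (Finset V) :=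
  Δ.filter fun σ => v ∉ σ

/-- Number of simplices of cardinality `p` (i.e. of dimension `p - 1`). -/
def fm (Δ : Finset (Finset V)) (p : ℕ) : ℕ :=
  (Δ.filter fun σ => σ.card = p).card

/-- Number of simplices of dimension `p` (i.e. of cardinality `p + 1`). -/
def fdim (Δ : Finset (Finset V)) (p : ℕ) : ℕ := fm Δ (p + 1)

/-- Euler characteristic `χ(Δ) = Σ_{p ≥ 0} (-1)^p f^p(Δ)` (empty simplex excluded). -/
def chi (Δ : Finset (Finset V)) : ℤ :=
  ∑ σ ∈ Δ.filter (fun σ => σ ≠ ∅), (-1 : ℤ) ^ (σ.card - 1)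

/-- The vertex set of a complex. -/
def verts (Δ : Finset (Finset V)) : Finset V := Δ.biUnion id

/-- `Δ` is pure of dimension `n`: every simplex is a face of some `n`-simplex. -/
def IsPure (Δ : Finset (Finset V)) (n : ℕ) : Prop :=
  ∀ σ ∈ Δ, ∃ ρ ∈ Δ, σ ⊆ ρ ∧ ρ.card = n + 1

/-- `Δ` is non-branching in dimension `n`: every `(n-1)`-simplex (cardinality `n`)
is a face of exactly two `n`-simplices (cardinality `n+1`). -/
def NonBranching (Δ : Finset (Finset V)) (n : ℕ) : Prop :=
  ∀ σ ∈ Δ, σ.card = n → (Δ.filter fun ρ => ρ.card = n + 1 ∧ σ ⊆ ρ).card = 2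

/-- Two `n`-simplices are adjacent if they share an `(n-1)`-face. -/
def adjFacet (Δ : Finset (Finset V)) (n : ℕ) (σ ρ : Finset V) : Prop :=
  σ ∈ Δ ∧ ρ ∈ Δ ∧ σ.card = n + 1 ∧ ρ.card = n + 1 ∧ (σ ∩ ρ).card = n

/-- Strong connectivity: any two `n`-simplices are joined by a chain of `n`-simplices,
consecutive ones sharing an `(n-1)`-face. -/
def StronglyConnected (Δ : Finset (Finset V)) (n : ℕ) : Prop :=
  ∀ σ ∈ Δ, σ.card = n + 1 → ∀ ρ ∈ Δ, ρ.card = n + 1 →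
    Relation.ReflTransGen (adjFacet Δ n) σ ρ

/-- An `n`-dimensional simplicial pseudo manifold. -/
def PseudoManifold (Δ : Finset (Finset V)) (n : ℕ) : Prop :=
  IsComplex Δ ∧ IsPure Δ n ∧ NonBranching Δ n ∧ StronglyConnected Δ n

/-- Normality for a 3-dimensional pseudo manifold: all vertex links are
2-dimensional pseudo manifolds. -/
def Normal3 (Δ : Finset (Finset V)) : Prop :=
  ∀ v ∈ verts Δ, PseudoManifold (lk Δ v) 2

/-!
Grow the set of triangles one at a time across shared edges (strong connectivity) and remember
each shared edge that is crossed: these `f² - 1` edges correspond to a spanning tree of the dual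
graph. Since an edge lies in exactly two triangles, a remembered edge is never met again, so the
two other edges of the triangle just added reconnect its endpoints. Hence the remaining
`f¹ - (f² - 1)` edges still connect all `f⁰` vertices, which gives `f¹ - f² + 1 ≥ f⁰ - 1`.
-/

def faces (Δ : Finset (Finset V)) (p : ℕ) : Finset (Finset V) :=
  Δ.filter fun σ => σ.card = p

theorem Relation.ReflTransGen.exists_crossing {α : Type*} {r : α → α → Prop} {p : α → Prop}
    {x y : α} (h : Relation.ReflTransGen r x y) (hx : p x) (hy : ¬p y) :
    ∃ u v, p u ∧ ¬p v ∧ r u v := by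
  induction h with
  | refl => exact absurd hx hy
  | @tail b c _ hbc ih =>
    by_cases hb : p b
    · exact ⟨b, c, hb, hy, hbc⟩
    · exact ih hb

theorem SimpleGraph.Reachable.of_forall_adj {W : Type*} {G H : SimpleGraph W}
    (hGH : ∀ x y, G.Adj x y → H.Reachable x y) {x y : W} (h : G.Reachable x y) :
    H.Reachable x y := by
  rw [SimpleGraph.reachable_iff_reflTransGen] at h ⊢
  exact h.lift' id fun u v huv => (H.reachable_iff_reflTransGen u v).1 (hGH u v huv)

theorem card_le_card_add_one_of_reachable {G : SimpleGraph V} {W : Finset V}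
    {A : Finset (Finset V)} (hW : ∀ x y, G.Adj x y → x ∈ W) (hA : ∀ x y, G.Adj x y → {x, y} ∈ A)
    (hconn : ∀ x ∈ W, ∀ y ∈ W, G.Reachable x y) : #W ≤ #A + 1 := by
  rcases W.eq_empty_or_nonempty with rfl | ⟨w, hw⟩
  · simp
  have hlift : ∀ {x y : V} (hx : x ∈ W), Relation.ReflTransGen G.Adj x y → ∀ hy : y ∈ W,
      (G.induce (W : Set V)).Reachable ⟨x, hx⟩ ⟨y, hy⟩ := by
    intro x y hx h
    induction h with
    | refl => exact fun _ => .rfl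
    | tail _ hbc ih => exact fun _ => (ih (hW _ _ hbc)).trans (SimpleGraph.Adj.reachable hbc)
  have hconn' : (G.induce (W : Set V)).Connected :=
    have : Nonempty (W : Set V) := ⟨⟨w, hw⟩⟩
    ⟨fun x y => hlift x.2 ((G.reachable_iff_reflTransGen _ _).1 (hconn _ x.2 _ y.2)) y.2⟩
  have hedges : Nat.card (G.induce (W : Set V)).edgeSet ≤ #A := by
    rw [← Nat.card_eq_finsetCard]
    refine Nat.card_le_card_of_injective (fun e => ⟨(e.1.map Subtype.val).toFinset, ?_⟩) ?_
    · obtain ⟨z, hz⟩ := e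
      induction z using Sym2.ind
      simpa [Sym2.toFinset_mk_eq] using hA _ _ hz
    · rintro ⟨z₁, hz₁⟩ ⟨z₂, hz₂⟩ h
      have hmap : z₁.map Subtype.val = z₂.map Subtype.val :=
        Sym2.ext fun v => by simpa using congrArg (v ∈ ·.1) h
      exact Subtype.ext (Sym2.map.injective Subtype.val_injective hmap)
  have := hconn'.card_vert_le_card_edgeSet_add_one
  rw [Nat.card_coe_set_eq, Set.ncard_coe_finset] at this
  omega

theorem IsComplex.fm_one_eq_card_verts {L : Finset (Finset V)} (hL : IsComplex L) :
    fm L 1 = #(verts L) := by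
  refine (card_bij (fun v _ => ({v} : Finset V)) (fun v hv => ?_) (fun _ _ _ _ => singleton_inj.1)
    fun σ hσ => ?_).symm
  · obtain ⟨σ, hσ, hvσ⟩ := mem_biUnion.1 hv
    exact mem_filter.2 ⟨hL σ hσ _ (singleton_subset_iff.2 hvσ), card_singleton v⟩
  · obtain ⟨hσL, hσc⟩ := mem_filter.1 hσ
    obtain ⟨v, rfl⟩ := card_eq_one.1 hσc
    exact ⟨v, mem_biUnion.2 ⟨_, hσL, mem_singleton_self v⟩, rfl⟩

theorem IsPure.verts_eq_biUnion {L : Finset (Finset V)} {n : ℕ} (hpure : IsPure L n) :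
    verts L = (faces L (n + 1)).biUnion id := by
  ext v
  simp only [verts, faces, mem_biUnion, mem_filter, id]
  constructor
  · rintro ⟨σ, hσ, hv⟩
    obtain ⟨ρ, hρ, hσρ, hρc⟩ := hpure σ hσ
    exact ⟨ρ, ⟨hρ, hρc⟩, hσρ hv⟩
  · rintro ⟨σ, ⟨hσ, -⟩, hv⟩
    exact ⟨σ, hσ, hv⟩

theorem IsPure.chi_eq_sum_fdim {L : Finset (Finset V)} {n : ℕ} (hpure : IsPure L n) :
    chi L = ∑ p ∈ range (n + 1), (-1) ^ p * (fdim L p : ℤ) := by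
  rw [chi, ← sum_fiberwise_of_maps_to (g := fun σ => #σ - 1) (t := range (n + 1))]
  · refine sum_congr rfl fun p _ => ?_
    have hfib : {σ ∈ {σ ∈ L | σ ≠ ∅} | #σ - 1 = p} = faces L (p + 1) := by
      ext σ
      simp only [faces, mem_filter, ← nonempty_iff_ne_empty, ← card_pos]
      rw [and_assoc]
      exact and_congr_right fun _ => by omega
    rw [hfib, fdim, fm, ← faces, sum_congr rfl fun σ hσ => by rw [(mem_filter.1 hσ).2]]
    simp [mul_comm]
  · intro σ hσ
    obtain ⟨hσL, hσne⟩ := mem_filter.1 hσ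
    obtain ⟨ρ, -, hσρ, hρ⟩ := hpure σ hσL
    have := card_le_card hσρ
    have := card_pos.2 (nonempty_iff_ne_empty.2 hσne)
    exact mem_range.2 (by omega)

theorem NonBranching.eq_or_eq_of_inter_subset {L : Finset (Finset V)} {n : ℕ} (hL : IsComplex L)
    (hnb : NonBranching L n) {σ ρ τ : Finset V} (hσρ : adjFacet L n σ ρ) (hτ : τ ∈ L)
    (hτc : #τ = n + 1) (hsub : σ ∩ ρ ⊆ τ) : τ = σ ∨ τ = ρ := by
  obtain ⟨hσ, hρ, hσc, hρc, hc⟩ := hσρ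
  have hne : σ ≠ ρ := by
    rintro rfl
    rw [inter_self] at hc
    omega
  have hpair : ({σ, ρ} : Finset (Finset V)) = L.filter fun ρ' => #ρ' = n + 1 ∧ σ ∩ ρ ⊆ ρ' := by
    refine eq_of_subset_of_card_le (insert_subset_iff.2 ⟨?_, singleton_subset_iff.2 ?_⟩) ?_
    · exact mem_filter.2 ⟨hσ, hσc, inter_subset_left⟩
    · exact mem_filter.2 ⟨hρ, hρc, inter_subset_right⟩
    · rw [hnb _ (hL σ hσ _ inter_subset_left) hc, card_pair hne]
  have : τ ∈ L.filter fun ρ' => #ρ' = n + 1 ∧ σ ∩ ρ ⊆ ρ' := mem_filter.2 ⟨hτ, hτc, hsub⟩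
  simpa [← hpair] using this

def skeletonWithout (S D : Finset (Finset V)) : SimpleGraph V where
  Adj x y := x ≠ y ∧ {x, y} ∉ D ∧ ∃ σ ∈ S, {x, y} ⊆ σ
  symm := ⟨fun x y h => by simpa only [pair_comm, ne_comm] using h⟩
  loopless := ⟨fun _ h => h.1 rfl⟩

theorem skeletonWithout_adj {S D : Finset (Finset V)} {x y : V} :
    (skeletonWithout S D).Adj x y ↔ x ≠ y ∧ {x, y} ∉ D ∧ ∃ σ ∈ S, {x, y} ⊆ σ :=
  Iff.rfl

theorem skeletonWithout_reachable_of_mem {S D : Finset (Finset V)} {τ e : Finset V} (hτ : τ ∈ S)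
    (hτc : #τ = 3) (hD : ∀ g ∈ D, g ⊆ τ → g = e) {x y : V} (hx : x ∈ τ) (hy : y ∈ τ) :
    (skeletonWithout S D).Reachable x y := by
  have hadj : ∀ u ∈ τ, ∀ v ∈ τ, u ≠ v → {u, v} ≠ e → (skeletonWithout S D).Adj u v :=
    fun u hu v hv huv he =>
      have huvτ : {u, v} ⊆ τ := insert_subset hu (singleton_subset_iff.2 hv)
      skeletonWithout_adj.2 ⟨huv, fun huvD => he (hD _ huvD huvτ), τ, hτ, huvτ⟩
  obtain rfl | hxy := eq_or_ne x y
  · rfl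
  by_cases he : {x, y} = e
  swap
  · exact (hadj x hx y hy hxy he).reachable
  subst he
  -- the edge `{x, y}` is removed: go around the third vertex of `τ`
  obtain ⟨c, hc, hcxy⟩ := exists_mem_notMem_of_card_lt_card (s := {x, y}) (t := τ)
    (by rw [hτc]; exact (card_le_two).trans_lt (by norm_num))
  simp only [mem_insert, mem_singleton, not_or] at hcxy
  have hc_edge : ∀ z, ({c, z} : Finset V) ≠ {x, y} := fun z h => by
    have : c ∈ ({x, y} : Finset V) := h ▸ mem_insert_self c _
    simp [hcxy.1, hcxy.2] at this
  exact (hadj c hc x hx hcxy.1 (hc_edge x)).reachable.symm.trans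
    (hadj c hc y hy hcxy.2 (hc_edge y)).reachable

/-- `D` stands for the edges crossed by a spanning tree of the dual graph of the triangles `S`. -/
structure IsTreeCut (L S D : Finset (Finset V)) : Prop where
  subset_triangles : S ⊆ faces L 3
  subset_edges : D ⊆ faces L 2
  card_add_one : #D + 1 = #S
  mem_of_subset : ∀ d ∈ D, ∀ τ ∈ faces L 3, d ⊆ τ → τ ∈ S
  reachable : ∀ x ∈ S.biUnion id, ∀ y ∈ S.biUnion id, (skeletonWithout S D).Reachable x y

theorem isTreeCut_singleton {L : Finset (Finset V)} {σ : Finset V} (hσ : σ ∈ faces L 3) :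
    IsTreeCut L {σ} ∅ where
  subset_triangles := singleton_subset_iff.2 hσ
  subset_edges := empty_subset _
  card_add_one := by simp
  mem_of_subset := by simp
  reachable x hx y hy := by
    rw [singleton_biUnion] at hx hy
    exact skeletonWithout_reachable_of_mem (mem_singleton_self σ) (mem_filter.1 hσ).2
      (by simp) (e := ∅) hx hy

theorem IsTreeCut.extend {L S D : Finset (Finset V)} {σ ρ : Finset V} (hL : IsComplex L)
    (hnb : NonBranching L 2) (h : IsTreeCut L S D) (hσ : σ ∈ S) (hρ : ρ ∉ S)
    (hσρ : adjFacet L 2 σ ρ) : IsTreeCut L (insert ρ S) (insert (σ ∩ ρ) D) := by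
  have ⟨hσL, hρL, _, hρc, hσρc⟩ := hσρ
  have hρF : ρ ∈ faces L 3 := mem_filter.2 ⟨hρL, hρc⟩
  have hD : ∀ g ∈ D, ¬g ⊆ ρ := fun g hg hgρ => hρ (h.mem_of_subset g hg ρ hρF hgρ)
  have hD' : ∀ g ∈ insert (σ ∩ ρ) D, g ⊆ ρ → g = σ ∩ ρ := by
    simp only [forall_mem_insert, implies_true, true_and]
    exact fun g hg hgρ => absurd hgρ (hD g hg)
  have htri := fun x (hx : x ∈ ρ) y (hy : y ∈ ρ) =>
    skeletonWithout_reachable_of_mem (mem_insert_self ρ S) hρc hD' hx hy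
  have hlift : ∀ x y, (skeletonWithout S D).Adj x y →
      (skeletonWithout (insert ρ S) (insert (σ ∩ ρ) D)).Reachable x y := by
    rintro x y ⟨hxy, hxyD, τ, hτ, hxyτ⟩
    by_cases he : {x, y} = σ ∩ ρ
    · have hxyρ : {x, y} ⊆ ρ := he ▸ inter_subset_right
      exact htri x (hxyρ (by simp)) y (hxyρ (by simp))
    · exact SimpleGraph.Adj.reachable
        ⟨hxy, by simp [he, hxyD], τ, mem_insert_of_mem hτ, hxyτ⟩
  obtain ⟨a, ha⟩ : (σ ∩ ρ).Nonempty := card_pos.1 (by rw [hσρc]; norm_num)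
  have hreach_a : ∀ x ∈ (insert ρ S).biUnion id,
      (skeletonWithout (insert ρ S) (insert (σ ∩ ρ) D)).Reachable x a := by
    intro x hx
    rw [biUnion_insert, mem_union] at hx
    rcases hx with hx | hx
    · exact htri x hx a (mem_inter.1 ha).2
    · exact (h.reachable x hx a (mem_biUnion.2 ⟨σ, hσ, (mem_inter.1 ha).1⟩)).of_forall_adj hlift
  refine ⟨insert_subset hρF h.subset_triangles, insert_subset ?_ h.subset_edges, ?_, ?_,
    fun x hx y hy => (hreach_a x hx).trans (hreach_a y hy).symm⟩
  · exact mem_filter.2 ⟨hL σ hσL _ inter_subset_left, hσρc⟩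
  · rw [card_insert_of_notMem fun he => hD _ he inter_subset_right, card_insert_of_notMem hρ,
      h.card_add_one]
  · intro d hd τ hτ hdτ
    rcases mem_insert.1 hd with rfl | hd
    · rcases hnb.eq_or_eq_of_inter_subset hL hσρ (mem_filter.1 hτ).1 (mem_filter.1 hτ).2 hdτ
        with rfl | rfl
      · exact mem_insert_of_mem hσ
      · exact mem_insert_self _ _
    · exact mem_insert_of_mem (h.mem_of_subset d hd τ hτ hdτ)

theorem IsTreeCut.exists_of_stronglyConnected {L S D : Finset (Finset V)} (hL : IsComplex L)
    (hnb : NonBranching L 2) (hsc : StronglyConnected L 2) (h : IsTreeCut L S D)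
    (hS : S.Nonempty) : ∃ D', IsTreeCut L (faces L 3) D' := by
  by_cases hF : faces L 3 ⊆ S
  · exact ⟨D, subset_antisymm h.subset_triangles hF ▸ h⟩
  obtain ⟨τ, hτF, hτS⟩ := not_subset.1 hF
  obtain ⟨σ₀, hσ₀⟩ := hS
  have hσ₀F := mem_filter.1 (h.subset_triangles hσ₀)
  obtain ⟨σ, ρ, hσ, hρ, hσρ⟩ := (hsc σ₀ hσ₀F.1 hσ₀F.2 τ (mem_filter.1 hτF).1
    (mem_filter.1 hτF).2).exists_crossing (p := (· ∈ S)) hσ₀ hτS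
  have hρF : ρ ∈ faces L 3 := mem_filter.2 ⟨hσρ.2.1, hσρ.2.2.2.1⟩
  exact (h.extend hL hnb hσ hρ hσρ).exists_of_stronglyConnected hL hnb hsc (insert_nonempty _ _)
termination_by #(faces L 3 \ S)
decreasing_by
  exact card_lt_card ((ssubset_iff_of_subset (sdiff_subset_sdiff subset_rfl (subset_insert _ _))).2
    ⟨ρ, mem_sdiff.2 ⟨hρF, hρ⟩, by simp⟩)

theorem card_faces_three_add_card_verts_le {L : Finset (Finset V)} (hL : IsComplex L)
    (hpure : IsPure L 2) (hnb : NonBranching L 2) (hsc : StronglyConnected L 2) :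
    #(faces L 3) + #(verts L) ≤ #(faces L 2) + 2 := by
  have hverts := hpure.verts_eq_biUnion
  rcases (faces L 3).eq_empty_or_nonempty with hF | ⟨σ, hσ⟩
  · simp [hverts, hF]
  obtain ⟨D, hD⟩ := (isTreeCut_singleton hσ).exists_of_stronglyConnected hL hnb hsc
    (singleton_nonempty σ)
  have hcount : #(verts L) ≤ #(faces L 2 \ D) + 1 := by
    refine card_le_card_add_one_of_reachable (G := skeletonWithout (faces L 3) D) ?_ ?_
      (hverts ▸ hD.reachable)
    · rintro x y ⟨-, -, τ, hτ, hxyτ⟩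
      exact hverts ▸ mem_biUnion.2 ⟨τ, hτ, hxyτ (mem_insert_self x _)⟩
    · rintro x y ⟨hxy, hxyD, τ, hτ, hxyτ⟩
      exact mem_sdiff.2 ⟨mem_filter.2 ⟨hL τ (mem_filter.1 hτ).1 _ hxyτ, card_pair hxy⟩, hxyD⟩
  have := card_sdiff_add_card_eq_card hD.subset_edges
  have := hD.card_add_one
  omega

theorem stmt10_general (L : Finset (Finset V)) (hL : IsComplex L)
    (hpure : IsPure L 2) (hnb : NonBranching L 2) (hsc : StronglyConnected L 2) :
    ((fdim L 2 : ℤ) - 1) + ((fdim L 0 : ℤ) - 1) ≤ (fdim L 1 : ℤ) ∧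
      chi L ≤ 2 := by
  have hcount := card_faces_three_add_card_verts_le hL hpure hnb hsc
  have hf₀ : fdim L 0 = #(verts L) := hL.fm_one_eq_card_verts
  have hf₁ : fdim L 1 = #(faces L 2) := rfl
  have hf₂ : fdim L 2 = #(faces L 3) := rfl
  rw [hpure.chi_eq_sum_fdim]
  simp only [sum_range_succ, sum_range_zero, hf₀, hf₁, hf₂]
  constructor <;> push_cast <;> linarith

/-- For a finite, connected, strongly connected, pure 2-dimensional,
non-branching simplicial complex `L`, `f^1(L) ≥ (f^2(L) − 1) + (f^0(L) − 1)`,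
hence `χ(L) ≤ 2`. -/
theorem stmt10 (L : Finset (Finset V)) (hL : IsComplex L)
    (hpure : IsPure L 2) (hnb : NonBranching L 2) (hsc : StronglyConnected L 2)
    (hconn : ∀ x ∈ verts L, ∀ y ∈ verts L,
      Relation.ReflTransGen (fun a b => a ≠ b ∧ ({a, b} : Finset V) ∈ L) x y) :
    ((fdim L 2 : ℤ) - 1) + ((fdim L 0 : ℤ) - 1) ≤ (fdim L 1 : ℤ) ∧
      chi L ≤ 2 :=
  stmt10_general L hL hpure hnb hsc
end

section
/- There is no 3-dimensional normal simplicial pseudo manifold with Euler characteristic −1. In particular, the gluing Δ^{G¹} dual to the GFT graph G¹, which has two vertices, four edges, two triangles and one tetrahedron (χ = 2 − 4 + 2 − 1 = −1), is not homeomorphic to (has the face vector of) any 3-dimensional normal pseudo manifold. -/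
open Finset

variable {V : Type*} [DecidableEq V]

/-!
Summing `χ(lk v)` over the vertices counts every `p`-simplex `p + 1` times, so
`∑_v χ(lk v) = 2 f¹ - 3 f² + 4 f³`; with `f² = 2 f³` (each triangle lies in exactly two
tetrahedra) this is `χ(Δ) = f⁰ - ½ ∑_v χ(lk v)`, which is `≥ 0` once every link has `χ ≤ 2`.

For a strongly connected 2-dimensional pseudo manifold with `t` triangles, grow a spanning tree
of the dual graph one triangle at a time. The `t - 1` edges it crosses can be deleted from the
1-skeleton without disconnecting it: a newly crossed edge lies in exactly the two triangles it
joins, and the new triangle provides a detour through its third vertex. Hence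
`f⁰ ≤ f¹ - (t - 1) + 1`, i.e. `χ ≤ 2`.
-/

theorem chi_eq_sum_fm {Δ : Finset (Finset V)} {N : ℕ} (hN : ∀ σ ∈ Δ, σ.card ≤ N) :
    chi Δ = ∑ k ∈ Icc 1 N, (-1 : ℤ) ^ (k - 1) * fm Δ k := by
  have hmaps : ∀ σ ∈ Δ.filter (· ≠ ∅), σ.card ∈ Icc 1 N := fun σ hσ => by
    rw [mem_filter] at hσ
    exact mem_Icc.2 ⟨card_pos.2 (nonempty_iff_ne_empty.2 hσ.2), hN σ hσ.1⟩
  rw [chi, ← sum_fiberwise_of_maps_to hmaps]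
  refine sum_congr rfl fun k hk => ?_
  have hk1 : k ≠ 0 := by have := (mem_Icc.1 hk).1; omega
  rw [filter_filter, sum_congr rfl fun σ hσ => by rw [(mem_filter.1 hσ).2.2], sum_const,
    nsmul_eq_mul, mul_comm, fm]
  congr 3
  exact filter_congr fun σ _ => ⟨And.right, fun h => ⟨by rintro rfl; simp at h; omega, h⟩⟩

theorem card_le_of_isPure {α : Type*} {Δ : Finset (Finset α)} {n : ℕ} (h : IsPure Δ n) :
    ∀ σ ∈ Δ, σ.card ≤ n + 1 := fun σ hσ => by
  obtain ⟨ρ, -, hσρ, hρ⟩ := h σ hσ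
  exact hρ ▸ card_le_card hσρ

theorem card_verts {Δ : Finset (Finset V)} (hc : IsComplex Δ) : (verts Δ).card = fm Δ 1 := by
  refine card_bij (fun v _ => {v}) (fun v hv => ?_) (fun _ _ _ _ => singleton_inj.1)
    fun σ hσ => ?_
  · obtain ⟨σ, hσ, hvσ⟩ := mem_biUnion.1 hv
    exact mem_filter.2 ⟨hc σ hσ _ (singleton_subset_iff.2 hvσ), card_singleton v⟩
  · obtain ⟨v, rfl⟩ := card_eq_one.1 (mem_filter.1 hσ).2
    exact ⟨v, mem_biUnion.2 ⟨{v}, (mem_filter.1 hσ).1, mem_singleton_self v⟩, rfl⟩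

theorem two_mul_fm_eq {Δ : Finset (Finset V)} {n : ℕ} (hc : IsComplex Δ)
    (hnb : NonBranching Δ n) :
    2 * fm Δ n = (n + 1) * fm Δ (n + 1) := by
  rw [fm, fm, mul_comm, mul_comm (n + 1)]
  refine card_mul_eq_card_mul (· ⊆ ·) (fun σ hσ => ?_) fun ρ hρ => ?_
  · rw [mem_filter] at hσ
    rw [bipartiteAbove, filter_filter, ← hnb σ hσ.1 hσ.2]
  · rw [mem_filter] at hρ
    have : (Δ.filter fun σ => σ.card = n).bipartiteBelow (· ⊆ ·) ρ = ρ.powersetCard n := by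
      ext τ
      simp only [bipartiteBelow, mem_filter, mem_powersetCard]
      exact ⟨fun h => ⟨h.2, h.1.2⟩, fun h => ⟨⟨hc ρ hρ.1 τ h.1, h.2⟩, h.1⟩⟩
    rw [this, card_powersetCard, hρ.2, Nat.choose_succ_self_right]

theorem fm_lk {Δ : Finset (Finset V)} (hc : IsComplex Δ) (v : V) (k : ℕ) :
    fm (lk Δ v) k = (Δ.filter fun τ => τ.card = k + 1 ∧ v ∈ τ).card := by
  refine card_bij (fun σ _ => insert v σ) (fun σ hσ => ?_) (fun σ hσ σ' hσ' h => ?_)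
    fun τ hτ => ⟨τ.erase v, ?_, ?_⟩
  · simp only [lk, filter_filter, mem_filter] at hσ ⊢
    exact ⟨hσ.2.1.2, by rw [card_insert_of_notMem hσ.2.1.1, hσ.2.2], mem_insert_self v σ⟩
  · simp only [lk, filter_filter, mem_filter] at hσ hσ'
    simpa [erase_insert hσ.2.1.1, erase_insert hσ'.2.1.1] using congrArg (erase · v) h
  · simp only [mem_filter] at hτ
    simp only [lk, filter_filter, mem_filter, insert_erase hτ.2.2, notMem_erase,
      not_false_eq_true, true_and, card_erase_of_mem hτ.2.2, hτ.2.1, add_tsub_cancel_right,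
      and_true]
    exact ⟨hc τ hτ.1 _ (erase_subset v τ), hτ.1⟩
  · exact insert_erase (mem_filter.1 hτ).2.2

theorem sum_fm_lk {Δ : Finset (Finset V)} (hc : IsComplex Δ) (k : ℕ) :
    ∑ v ∈ verts Δ, fm (lk Δ v) k = (k + 1) * fm Δ (k + 1) := by
  simp_rw [fm_lk hc]
  have := sum_card_bipartiteAbove_eq_sum_card_bipartiteBelow (s := verts Δ)
    (t := Δ.filter fun τ => τ.card = k + 1) (r := fun v τ => v ∈ τ)
  simp only [bipartiteAbove, bipartiteBelow, filter_filter] at this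
  rw [this, sum_congr rfl fun τ hτ => ?_, sum_const, smul_eq_mul, mul_comm, fm]
  rw [mem_filter] at hτ
  rw [← hτ.2]
  congr 1
  ext v
  simp only [mem_filter, verts, mem_biUnion, id]
  exact ⟨And.right, fun h => ⟨⟨τ, hτ.1, h⟩, h⟩⟩

theorem sum_chi_lk {Δ : Finset (Finset V)} (hc : IsComplex Δ) {N : ℕ}
    (hN : ∀ σ ∈ Δ, σ.card ≤ N + 1) :
    ∑ v ∈ verts Δ, chi (lk Δ v) =
      ∑ k ∈ Icc 1 N, (-1 : ℤ) ^ (k - 1) * ((k + 1) * fm Δ (k + 1) : ℕ) := by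
  have hlk : ∀ v, ∀ σ ∈ lk Δ v, σ.card ≤ N := fun v σ hσ => by
    simp only [lk, mem_filter] at hσ
    have := hN _ hσ.2.2
    rw [card_insert_of_notMem hσ.2.1] at this
    omega
  simp_rw [chi_eq_sum_fm (hlk _)]
  rw [sum_comm]
  refine sum_congr rfl fun k _ => ?_
  rw [← mul_sum, ← Nat.cast_sum, sum_fm_lk hc]

def graphOfEdges (F : Finset (Finset V)) : SimpleGraph V :=
  SimpleGraph.fromRel fun a b => ({a, b} : Finset V) ∈ F

theorem graphOfEdges_adj {F : Finset (Finset V)} {a b : V} :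
    (graphOfEdges F).Adj a b ↔ a ≠ b ∧ ({a, b} : Finset V) ∈ F := by
  simp [graphOfEdges, pair_comm b a]

theorem graphOfEdges_mono {F F' : Finset (Finset V)} (h : F ⊆ F') :
    graphOfEdges F ≤ graphOfEdges F' := fun _ _ hab =>
  graphOfEdges_adj.2 ⟨(graphOfEdges_adj.1 hab).1, h (graphOfEdges_adj.1 hab).2⟩

theorem card_le_card_add_one_of_reachable_s18 {F : Finset (Finset V)} {P : Finset V}
    (hF : ∀ e ∈ F, e ⊆ P) (hP : ∀ x ∈ P, ∀ y ∈ P, (graphOfEdges F).Reachable x y) :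
    P.card ≤ F.card + 1 := by
  rcases P.eq_empty_or_nonempty with rfl | ⟨x₀, hx₀⟩
  · simp
  let H : SimpleGraph P := (graphOfEdges F).comap Subtype.val
  have hH : H.Connected := by
    refine (SimpleGraph.connected_iff_exists_forall_reachable H).2 ⟨⟨x₀, hx₀⟩, fun y => ?_⟩
    suffices ∀ z, Relation.ReflTransGen (graphOfEdges F).Adj x₀ z → ∀ hz : z ∈ P,
        Relation.ReflTransGen H.Adj ⟨x₀, hx₀⟩ ⟨z, hz⟩ by
      simp_rw [SimpleGraph.reachable_iff_reflTransGen] at hP ⊢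
      exact this y (hP x₀ hx₀ y y.2) y.2
    intro z hz
    induction hz with
    | refl => exact fun _ => .refl
    | tail _ hbc ih =>
      have hbc' := graphOfEdges_adj.1 hbc
      exact fun hc => (ih (hF _ hbc'.2 (mem_insert_self _ _))).tail hbc
  have hedges : Nat.card H.edgeSet ≤ F.card := by
    let f : H.edgeSet → F := fun e => ⟨(e.1.map Subtype.val).toFinset, by
      obtain ⟨e, he⟩ := e
      induction e using Sym2.ind with
      | h a b => simpa [Sym2.toFinset_mk_eq] using (graphOfEdges_adj.1 he).2⟩
    have hf : Function.Injective f := fun e e' h => by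
      refine Subtype.ext (Sym2.map.injective Subtype.val_injective (Sym2.ext fun x => ?_))
      simpa [f, Sym2.mem_toFinset] using congrArg (x ∈ ·.1) h
    simpa using Nat.card_le_card_of_injective f hf
  simpa using hH.card_vert_le_card_edgeSet_add_one.trans (Nat.add_le_add_right hedges 1)

theorem Relation.ReflTransGen.exists_rel_of_mem_of_notMem {α : Type*} {r : α → α → Prop}
    {S : Set α} {a b : α} (h : Relation.ReflTransGen r a b) (ha : a ∈ S) (hb : b ∉ S) :
    ∃ u ∈ S, ∃ t ∉ S, r u t := by
  induction h with
  | refl => exact absurd ha hb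
  | @tail c d _ hcd ih => by_cases hc : c ∈ S <;> [exact ⟨c, hc, d, hb, hcd⟩; exact ih hc]

theorem SimpleGraph.Reachable.of_forall_adj_s18 {α : Type*} {G G' : SimpleGraph α}
    (h : ∀ a b, G.Adj a b → G'.Reachable a b) {x y : α} (hxy : G.Reachable x y) :
    G'.Reachable x y := by
  rw [SimpleGraph.reachable_iff_reflTransGen] at hxy ⊢
  exact Relation.ReflTransGen.lift' id (fun a b hab =>
    (SimpleGraph.reachable_iff_reflTransGen a b).1 (h a b hab)) _ _ hxy

def edgesOf (S : Finset (Finset V)) : Finset (Finset V) := S.biUnion (powersetCard 2)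

theorem mem_edgesOf {S : Finset (Finset V)} {e : Finset V} :
    e ∈ edgesOf S ↔ ∃ t ∈ S, e ⊆ t ∧ e.card = 2 := by
  simp [edgesOf]

theorem edgesOf_insert (t : Finset V) (S : Finset (Finset V)) :
    edgesOf (insert t S) = powersetCard 2 t ∪ edgesOf S :=
  biUnion_insert

/-- `R` is the set of edges crossed by a spanning tree of the dual graph of the triangles `S ⊆ T`
(two triangles are adjacent when they share an edge): removing `R` from the 1-skeleton of `S`
keeps it connected, and no triangle of `T` outside `S` contains an edge of `R`. -/
structure IsDualSpanningTree (T S R : Finset (Finset V)) : Prop where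
  subset : S ⊆ T
  subset_edgesOf : R ⊆ edgesOf S
  card_eq : S.card = R.card + 1
  mem_of_subset : ∀ e ∈ R, ∀ t ∈ T, e ⊆ t → t ∈ S
  reachable : ∀ x ∈ verts S, ∀ y ∈ verts S, (graphOfEdges (edgesOf S \ R)).Reachable x y

theorem isDualSpanningTree_singleton {T : Finset (Finset V)} {t : Finset V} (ht : t ∈ T) :
    IsDualSpanningTree T {t} ∅ where
  subset := singleton_subset_iff.2 ht
  subset_edgesOf := empty_subset _
  card_eq := rfl
  mem_of_subset := by simp
  reachable x hx y hy := by
    simp only [verts, singleton_biUnion, id] at hx hy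
    rcases eq_or_ne x y with rfl | hxy
    · rfl
    refine SimpleGraph.Adj.reachable (graphOfEdges_adj.2 ⟨hxy, ?_⟩)
    simpa [mem_edgesOf] using ⟨insert_subset hx (singleton_subset_iff.2 hy), card_pair hxy⟩

theorem Finset.eq_or_eq_of_card_le_two {α : Type*} {s : Finset α} (hs : s.card ≤ 2) {a b c : α}
    (ha : a ∈ s) (hb : b ∈ s) (hab : a ≠ b) (hc : c ∈ s) : c = a ∨ c = b := by
  by_contra! h
  exact hs.not_gt (two_lt_card.2 ⟨a, ha, b, hb, c, hc, hab, h.1.symm, h.2.symm⟩)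

theorem graphOfEdges_reachable_of_reroute {E E' : Finset (Finset V)} {e₀ : Finset V} {w : V}
    (hw : ∀ a ∈ e₀, (graphOfEdges E').Adj a w) (hE : ∀ e ∈ E, e ≠ e₀ → e ∈ E') {x y : V}
    (hxy : (graphOfEdges E).Reachable x y) : (graphOfEdges E').Reachable x y := by
  refine SimpleGraph.Reachable.of_forall_adj_s18 (fun a b hab => ?_) hxy
  obtain ⟨hab, habE⟩ := graphOfEdges_adj.1 hab
  by_cases he : ({a, b} : Finset V) = e₀
  · have ha : a ∈ e₀ := he ▸ mem_insert_self a {b}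
    have hb : b ∈ e₀ := he ▸ mem_insert_of_mem (mem_singleton_self b)
    exact (hw a ha).reachable.trans (hw b hb).reachable.symm
  · exact (graphOfEdges_adj.2 ⟨hab, hE _ habE he⟩).reachable

theorem IsDualSpanningTree.reachable_insert {T S R : Finset (Finset V)} {u t : Finset V} {w : V}
    (hR : IsDualSpanningTree T S R) (hu : u ∈ S) (ht : t ∈ T) (htS : t ∉ S)
    (hw : w ∉ u ∩ t) (htw : insert w (u ∩ t) = t) (hut : (u ∩ t).Nonempty) :
    ∀ x ∈ verts (insert t S), ∀ y ∈ verts (insert t S),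
      (graphOfEdges (edgesOf (insert t S) \ insert (u ∩ t) R)).Reachable x y := by
  set e₀ := u ∩ t
  set G' := graphOfEdges (edgesOf (insert t S) \ insert e₀ R)
  have hadj_w : ∀ a ∈ e₀, G'.Adj a w := fun a ha => by
    have haw : ({a, w} : Finset V) ⊆ t := htw ▸ insert_subset (mem_insert_of_mem ha)
      (singleton_subset_iff.2 (mem_insert_self w e₀))
    refine graphOfEdges_adj.2 ⟨ne_of_mem_of_not_mem ha hw, mem_sdiff.2 ⟨?_, fun h => ?_⟩⟩
    · rw [edgesOf_insert]
      exact mem_union_left _ (mem_powersetCard.2 ⟨haw, card_pair (ne_of_mem_of_not_mem ha hw)⟩)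
    · refine (mem_insert.1 h).elim (fun h => hw ?_) fun h => htS (hR.mem_of_subset _ h t ht haw)
      exact h ▸ mem_insert_of_mem (mem_singleton_self w)
  obtain ⟨x, hx⟩ := hut
  have hxS : x ∈ verts S := mem_biUnion.2 ⟨u, hu, inter_subset_left hx⟩
  have hreach : ∀ z ∈ verts (insert t S), G'.Reachable x z := fun z hz => by
    by_cases hzS : z ∈ verts S
    · refine graphOfEdges_reachable_of_reroute hadj_w (fun e he hne => ?_)
        (hR.reachable x hxS z hzS)
      refine mem_sdiff.2 ⟨edgesOf_insert t S ▸ mem_union_right _ (mem_sdiff.1 he).1, ?_⟩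
      exact fun h => (mem_insert.1 h).elim hne (mem_sdiff.1 he).2
    rw [verts, biUnion_insert, mem_union, id, ← htw, mem_insert] at hz
    rcases hz with (rfl | hze₀) | hzS'
    · exact (hadj_w x hx).reachable
    · exact absurd (mem_biUnion.2 ⟨u, hu, inter_subset_left hze₀⟩) hzS
    · exact absurd hzS' hzS
  exact fun y hy z hz => (hreach y hy).symm.trans (hreach z hz)

theorem IsDualSpanningTree.insert_of_adj {T S R : Finset (Finset V)} {u t : Finset V}
    (hR : IsDualSpanningTree T S R)
    (hnb : ∀ e : Finset V, e.card = 2 → (T.filter (e ⊆ ·)).card ≤ 2)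
    (hu : u ∈ S) (ht : t ∈ T) (htS : t ∉ S) (ht3 : t.card = 3) (hut : (u ∩ t).card = 2) :
    IsDualSpanningTree T (insert t S) (insert (u ∩ t) R) := by
  have he₀t : u ∩ t ⊆ t := inter_subset_right
  obtain ⟨w, hw, htw⟩ := exists_eq_insert_iff.2 ⟨he₀t, by omega⟩
  refine ⟨insert_subset ht hR.subset, ?_, ?_, fun e he t' ht' het' => ?_,
    hR.reachable_insert hu ht htS hw htw (card_pos.1 (by omega))⟩
  · rw [edgesOf_insert]
    refine insert_subset (mem_union_right _ (mem_edgesOf.2 ⟨u, hu, inter_subset_left, hut⟩))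
      (hR.subset_edgesOf.trans subset_union_right)
  · rw [card_insert_of_notMem htS, hR.card_eq,
      card_insert_of_notMem fun h => htS (hR.mem_of_subset _ h t ht he₀t)]
  · rcases mem_insert.1 he with rfl | he
    · -- `u` and `t` are the only two triangles on the edge `u ∩ t`
      rcases eq_or_eq_of_card_le_two (hnb _ hut)
        (mem_filter.2 ⟨hR.subset hu, inter_subset_left⟩) (mem_filter.2 ⟨ht, he₀t⟩)
        (ne_of_mem_of_not_mem hu htS) (mem_filter.2 ⟨ht', het'⟩) with rfl | rfl
      · exact mem_insert_of_mem hu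
      · exact mem_insert_self _ _
    · exact mem_insert_of_mem (hR.mem_of_subset e he t' ht' het')

theorem exists_isDualSpanningTree {T : Finset (Finset V)} (h3 : ∀ t ∈ T, t.card = 3)
    (hnb : ∀ e : Finset V, e.card = 2 → (T.filter (e ⊆ ·)).card ≤ 2)
    (hconn : ∀ s ∈ T, ∀ t ∈ T,
      Relation.ReflTransGen (fun a b => b ∈ T ∧ (a ∩ b).card = 2) s t)
    (hne : T.Nonempty) : ∃ R, IsDualSpanningTree T T R := by
  obtain ⟨t₀, ht₀⟩ := hne
  have hgrow : ∀ k < T.card, ∃ S R, IsDualSpanningTree T S R ∧ S.card = k + 1 := by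
    intro k
    induction k with
    | zero => exact fun _ => ⟨{t₀}, ∅, isDualSpanningTree_singleton ht₀, rfl⟩
    | succ k ih =>
      intro hk
      obtain ⟨S, R, hR, hS⟩ := ih (by omega)
      obtain ⟨t, ht, htS⟩ := not_subset.1 fun h : T ⊆ S => by have := card_le_card h; omega
      obtain ⟨s, hs⟩ : S.Nonempty := card_pos.1 (by omega)
      obtain ⟨u, hu, t', ht'S, ht', hut'⟩ :=
        (hconn s (hR.subset hs) t ht).exists_rel_of_mem_of_notMem (S := ↑S) hs htS
      exact ⟨_, _, hR.insert_of_adj hnb hu ht' ht'S (h3 t' ht') hut',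
        by rw [card_insert_of_notMem ht'S, hS]⟩
  obtain ⟨S, R, hR, hS⟩ := hgrow (T.card - 1) (by have := card_pos.2 ⟨t₀, ht₀⟩; omega)
  exact ⟨R, eq_of_subset_of_card_le hR.subset (by omega) ▸ hR⟩

theorem exists_isDualSpanningTree_of_pseudoManifold {L : Finset (Finset V)}
    (hL : PseudoManifold L 2) (hT : (L.filter (·.card = 3)).Nonempty) :
    ∃ R, IsDualSpanningTree (L.filter (·.card = 3)) (L.filter (·.card = 3)) R := by
  obtain ⟨hc, -, hnb, hsc⟩ := hL
  refine exists_isDualSpanningTree (fun t ht => (mem_filter.1 ht).2) (fun e he => ?_)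
    (fun s hs t ht => ?_) hT
  · by_cases heL : e ∈ L
    · rw [filter_filter, ← hnb e heL he]
    · rw [filter_eq_empty_iff.2 fun ρ hρ heρ => heL (hc ρ (mem_filter.1 hρ).1 e heρ)]
      exact Nat.zero_le _
  · rw [mem_filter] at hs ht
    refine Relation.ReflTransGen.mono (fun a b (hab : adjFacet L 2 a b) => ?_) s t
      (hsc s hs.1 hs.2 t ht.1 ht.2)
    exact ⟨mem_filter.2 ⟨hab.2.1, hab.2.2.2.1⟩, hab.2.2.2.2⟩

theorem chi_le_two_of_pseudoManifold {L : Finset (Finset V)} (hL : PseudoManifold L 2) :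
    chi L ≤ 2 := by
  have hchi : chi L = fm L 1 - fm L 2 + fm L 3 := by
    rw [chi_eq_sum_fm (card_le_of_isPure hL.2.1)]
    simp [Finset.sum_Icc_succ_top, sub_eq_add_neg]
  set T := L.filter (·.card = 3)
  rcases T.eq_empty_or_nonempty with hT | hT
  · have : L = ∅ := eq_empty_of_forall_notMem fun σ hσ => by
      obtain ⟨ρ, hρ, -, hρ3⟩ := hL.2.1 σ hσ
      exact (eq_empty_iff_forall_notMem.1 hT) ρ (mem_filter.2 ⟨hρ, hρ3⟩)
    simp [this, chi]
  obtain ⟨R, hR⟩ := exists_isDualSpanningTree_of_pseudoManifold hL hT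
  obtain ⟨hc, hpure, -, -⟩ := hL
  set E := L.filter (·.card = 2)
  have hTE : edgesOf T ⊆ E := fun e he => by
    obtain ⟨t, ht, het, he2⟩ := mem_edgesOf.1 he
    exact mem_filter.2 ⟨hc t (mem_filter.1 ht).1 e het, he2⟩
  have hvertsL : verts L ⊆ verts T := fun x hx => by
    obtain ⟨σ, hσ, hxσ⟩ := mem_biUnion.1 hx
    obtain ⟨ρ, hρ, hσρ, hρ3⟩ := hpure σ hσ
    exact mem_biUnion.2 ⟨ρ, mem_filter.2 ⟨hρ, hρ3⟩, hσρ hxσ⟩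
  have hbound : (verts L).card ≤ (E \ R).card + 1 :=
    card_le_card_add_one_of_reachable_s18
      (fun e he => subset_biUnion_of_mem id (mem_filter.1 (mem_sdiff.1 he).1).1)
      fun x hx y hy => (hR.reachable x (hvertsL hx) y (hvertsL hy)).mono
        (graphOfEdges_mono (sdiff_subset_sdiff hTE subset_rfl))
  rw [card_sdiff_of_subset (hR.subset_edgesOf.trans hTE), card_verts hc] at hbound
  have hRE : R.card ≤ E.card := card_le_card (hR.subset_edgesOf.trans hTE)
  have hE : E.card = fm L 2 := rfl
  have hRcard : fm L 3 = R.card + 1 := hR.card_eq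
  omega

/-- There is no 3-dimensional normal simplicial pseudo manifold with
Euler characteristic −1; in particular no such complex has `χ = 2 − 4 + 2 − 1 = −1`,
the Euler characteristic of the gluing dual to the GFT graph `G¹`. -/
theorem stmt18 :
    ∀ (W : Type) [DecidableEq W] (Δ : Finset (Finset W)),
      PseudoManifold Δ 3 → Normal3 Δ → chi Δ ≠ -1 := by
  rintro W _ Δ ⟨hc, hpure, hnb, -⟩ hN
  have hchi : chi Δ = fm Δ 1 - fm Δ 2 + fm Δ 3 - fm Δ 4 := by
    rw [chi_eq_sum_fm (card_le_of_isPure hpure)]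
    simp [Finset.sum_Icc_succ_top, sub_eq_add_neg]
  have hlinks : ∑ v ∈ verts Δ, chi (lk Δ v) = 2 * fm Δ 2 - 3 * fm Δ 3 + 4 * fm Δ 4 := by
    rw [sum_chi_lk hc (card_le_of_isPure hpure)]
    simp [Finset.sum_Icc_succ_top, sub_eq_add_neg]
  have hlinks_le : ∑ v ∈ verts Δ, chi (lk Δ v) ≤ 2 * fm Δ 1 :=
    calc ∑ v ∈ verts Δ, chi (lk Δ v) ≤ ∑ _v ∈ verts Δ, 2 :=
          sum_le_sum fun v hv => chi_le_two_of_pseudoManifold (hN v hv)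
      _ = 2 * fm Δ 1 := by rw [sum_const, card_verts hc, nsmul_eq_mul, mul_comm]
  have hfacets : 2 * fm Δ 3 = 4 * fm Δ 4 := two_mul_fm_eq hc hnb
  omega
end
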